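/- For every Young diagram λ inside the k×(n−k) rectangle and every reduced decomposition w_λ = s_{i_ℓ} ⋯ s_{i_1} (so ℓ = |λ|), one has Q_{w_λ·𝟏} = ∇_{i_ℓ}(∇_{i_{ℓ−1}}(⋯ ∇_{i_1}(x_{k+1} x_{k+2} ⋯ x_n) ⋯)). In particular, the right-hand side does not depend on the choice of reduced decomposition of w_λ. -/

import Mathlib

open scoped Classical

set_option maxHeartbeats 1000000
set_option synthInstance.maxHeartbeats 1000000

noncomputable section

/-- The field ℚ(v) of rational functions. -/
abbrev F : Type := RatFunc ℚ

/-- The variable v. -/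
def v : F := RatFunc.X

/-- The quantum integer [r] = (v^r - v^{-r})/(v - v^{-1}). -/
def qint (r : ℕ) : F := (v ^ r - v⁻¹ ^ r) / (v - v⁻¹)

/-- Sequences of n signs (`true` = `+`) with exactly k pluses. -/
abbrev Stt (n k : ℕ) := {ε : Fin n → Bool // (Finset.univ.filter fun t => ε t = true).card = k}

/-- The adjacent transposition s_m ∈ S_n (1-based: swaps positions m and m+1). -/
def sperm (n m : ℕ) : Equiv.Perm (Fin n) :=
  if h : 1 ≤ m ∧ m < n then Equiv.swap ⟨m - 1, by omega⟩ ⟨m, h.2⟩ else 1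

/-- Action of w ∈ S_n on sequences: (w·ε)_{w(t)} = ε_t. -/
def actE {n : ℕ} (w : Equiv.Perm (Fin n)) (ε : Fin n → Bool) : Fin n → Bool :=
  fun u => ε (w⁻¹ u)

lemma card_actE {n k : ℕ} (w : Equiv.Perm (Fin n)) (ε : Fin n → Bool)
    (h : (Finset.univ.filter fun t => ε t = true).card = k) :
    (Finset.univ.filter fun t => actE w ε t = true).card = k := by
  rw [← h]
  apply Finset.card_bij (fun t _ => w⁻¹ t)
  · intro a ha
    have := (Finset.mem_filter.mp ha).2
    simpa [actE] using this
  · intro a _ b _ hab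
    exact (Equiv.injective _) hab
  · intro b hb
    refine ⟨w b, Finset.mem_filter.mpr ⟨Finset.mem_univ _, ?_⟩, by simp⟩
    simpa [actE] using (Finset.mem_filter.mp hb).2

/-- Action of S_n on the set E of sequences with k pluses. -/
def actS {n k : ℕ} (w : Equiv.Perm (Fin n)) (ε : Stt n k) : Stt n k :=
  ⟨actE w ε.1, card_actE w ε.1 ε.2⟩

/-- The module M, free over ℚ(v) with basis E. -/
abbrev M (n k : ℕ) := Stt n k → F

/-- The basis vector of M corresponding to ε ∈ E. -/
def bv {n k : ℕ} (ε : Stt n k) : M n k := Pi.single ε 1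

/-- The sequence 𝟏 = (+,…,+,−,…,−) (k pluses then n−k minuses). -/
def oneSeq (n k : ℕ) : Fin n → Bool := fun t => decide ((t : ℕ) < k)

lemma card_oneSeq (n k : ℕ) (h : k ≤ n) :
    (Finset.univ.filter fun t => oneSeq n k t = true).card = k := by
  have : (Finset.univ.filter fun t => oneSeq n k t = true)
      = Finset.univ.map (Fin.castLEEmb h) := by
    ext t
    simp only [Finset.mem_filter, Finset.mem_univ, true_and, oneSeq, decide_eq_true_eq,
      Finset.mem_map]
    constructor
    · intro ht; exact ⟨⟨t, ht⟩, rfl⟩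
    · rintro ⟨s, rfl⟩; exact s.2
  rw [this, Finset.card_map, Finset.card_univ, Fintype.card_fin]

/-- 𝟏 as an element of E. -/
def oneS (n k : ℕ) (h : k ≤ n) : Stt n k := ⟨oneSeq n k, card_oneSeq n k h⟩

/-- The operator T_m on M (1 ≤ m ≤ n−1), defined on basis elements. -/
def Thk (n k : ℕ) (m : ℕ) : M n k →ₗ[F] M n k :=
  (Pi.basisFun F (Stt n k)).constr ℕ fun ε =>
    if h : 1 ≤ m ∧ m < n then
      let a := ε.1 ⟨m - 1, by omega⟩
      let b := ε.1 ⟨m, h.2⟩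
      if a = true ∧ b = false then bv (actS (sperm n m) ε)
      else if a = b then (-v⁻¹) • bv ε
      else bv (actS (sperm n m) ε) + (v - v⁻¹) • bv ε
    else 0

/-- A Young diagram inside the k×(n−k) rectangle, given by its row lengths
(1-based: row i has lam i boxes). -/
def IsYoung (n k : ℕ) (lam : ℕ → ℕ) : Prop :=
  (∀ i, 1 ≤ i → lam (i + 1) ≤ lam i) ∧ lam 1 ≤ n - k ∧ (∀ i, k < i → lam i = 0)

/-- The boxes of λ, listed row by row from the bottom row to the top row,
each row from its last box to its first (so box (1,1) comes last). -/
def boxList (k : ℕ) (lam : ℕ → ℕ) : List (ℕ × ℕ) :=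
  ((List.range k).reverse.map fun i' =>
    (List.range (lam (i' + 1))).reverse.map fun j' => (i' + 1, j' + 1)).flatten

/-- The word of w_λ: letter k+j−i for box (i,j). -/
def wword (k : ℕ) (lam : ℕ → ℕ) : List ℕ := (boxList k lam).map fun b => k + b.2 - b.1

/-- The permutation w_λ = ∏_{(i,j)∈λ} s_{k+j−i} (box (1,1) rightmost). -/
def wperm (n k : ℕ) (lam : ℕ → ℕ) : Equiv.Perm (Fin n) := ((wword k lam).map (sperm n)).prod

/-- w_λ·𝟏 as an element of E. -/
def wSt (n k : ℕ) (h : k ≤ n) (lam : ℕ → ℕ) : Stt n k := actS (wperm n k lam) (oneS n k h)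

/-- r is the system of shifts of λ: r_{ij} = max(r_{i,j+1}, r_{i+1,j}) + 1 on boxes of λ,
and r_{ij} = 0 off λ. -/
def IsShifts (lam : ℕ → ℕ) (r : ℕ → ℕ → ℕ) : Prop :=
  ∀ i j, r i j = if 1 ≤ i ∧ 1 ≤ j ∧ j ≤ lam i then max (r i (j + 1)) (r (i + 1) j) + 1 else 0

/-- The operator X_λ = ∏_{(i,j)∈λ} (T_{k+j−i} − v^{r_{ij}}/[r_{ij}]), the factor of
box (1,1) applied first. -/
def Xop (n k : ℕ) (lam : ℕ → ℕ) (r : ℕ → ℕ → ℕ) : Module.End F (M n k) :=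
  ((boxList k lam).map fun b =>
    (Thk n k (k + b.2 - b.1) - (v ^ r b.1 b.2 / qint (r b.1 b.2)) • (1 : Module.End F (M n k)) : Module.End F (M n k))).prod

/-- O(v^m): rational functions with a zero of order ≥ m at v = 0. -/
def Ozero (m : ℕ) : Set F :=
  {f | ∃ p q : Polynomial ℚ, Polynomial.eval 0 q ≠ 0 ∧
        f = v ^ m * (algebraMap (Polynomial ℚ) F p / algebraMap (Polynomial ℚ) F q)}

/-- Value of a sequence at the 1-based position t. -/
def posVal {n : ℕ} (ε : Fin n → Bool) (t : ℕ) : Bool :=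
  if h : 1 ≤ t ∧ t ≤ n then ε ⟨t - 1, by omega⟩ else false

/-- a(i) = k + λ_i − i + 1 for 1 ≤ i ≤ k, and a(i) = 0 for i > k. -/
def aF (k : ℕ) (lam : ℕ → ℕ) (i : ℕ) : ℕ := if i ≤ k then k + lam i + 1 - i else 0

/-- The contribution r_t(ε) to the weight. -/
def weightT (k : ℕ) (lam : ℕ → ℕ) (r : ℕ → ℕ → ℕ) {n : ℕ} (ε : Fin n → Bool) (t : ℕ) : ℕ :=
  ∑ i ∈ Finset.Icc 1 k,
    ((if posVal ε t = false ∧ 1 ≤ lam i ∧ t = aF k lam i then r i (lam i) - 1 else 0) +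
     (if posVal ε t = true ∧ aF k lam (i + 1) < t ∧ t < aF k lam i then r i (t + i - k) else 0))

/-- The weight r_λ(ε) = Σ_{t=1}^n r_t(ε). -/
def weight (n k : ℕ) (lam : ℕ → ℕ) (r : ℕ → ℕ → ℕ) (ε : Fin n → Bool) : ℕ :=
  ∑ t ∈ Finset.Icc 1 n, weightT k lam r ε t

/-- 𝓛_λ = Σ_ε O(v^{r_λ(ε)}) ε. -/
def Lset (n k : ℕ) (lam : ℕ → ℕ) (r : ℕ → ℕ → ℕ) : Set (M n k) :=
  {m | ∀ ε : Stt n k, m ε ∈ Ozero (weight n k lam r ε.1)}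

/-- The length (number of inversions) of a permutation. -/
def len {n : ℕ} (w : Equiv.Perm (Fin n)) : ℕ :=
  (Finset.univ.filter fun p : Fin n × Fin n => p.1 < p.2 ∧ w p.2 < w p.1).card

/-- The parabolic subgroup W_J = S_k × S_{n−k}: permutations mapping {1,…,k} to itself. -/
def WJ (n k : ℕ) : Set (Equiv.Perm (Fin n)) :=
  {σ | ∀ t : Fin n, (t : ℕ) < k → ((σ t : ℕ) < k)}

/-- W^J: permutations of minimal length in their coset w·W_J. -/
def Wmin (n k : ℕ) : Set (Equiv.Perm (Fin n)) :=
  {w | ∀ σ ∈ WJ n k, len w ≤ len (w * σ)}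

/-- The variable x_p (1-based position p) in ℚ(v)[x_1,…,x_n]. -/
def xv (n p : ℕ) : MvPolynomial (Fin n) F :=
  if h : 1 ≤ p ∧ p ≤ n then MvPolynomial.X ⟨p - 1, by omega⟩ else 0

/-- Exchange of the variables x_i and x_{i+1} (1-based, 1 ≤ i ≤ n−1). -/
def swapf (n i : ℕ) (f : MvPolynomial (Fin n) F) : MvPolynomial (Fin n) F :=
  if h : 1 ≤ i ∧ i < n then
    MvPolynomial.rename (Equiv.swap ⟨i - 1, by omega⟩ ⟨i, h.2⟩) f
  else f

/-- The divided difference ∂_i f = (f − s_i f)/(x_i − x_{i+1}). -/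
def ddiff (n i : ℕ) (f : MvPolynomial (Fin n) F) : MvPolynomial (Fin n) F :=
  if h : ∃ g, f - swapf n i f = (xv n i - xv n (i + 1)) * g then h.choose else 0

/-- The operator ∇_i f = (v x_{i+1} − v⁻¹ x_i)·∂_i f. -/
def nabla (n i : ℕ) (f : MvPolynomial (Fin n) F) : MvPolynomial (Fin n) F :=
  (MvPolynomial.C v * xv n (i + 1) - MvPolynomial.C v⁻¹ * xv n i) * ddiff n i f

/-- Parenthesis matching: minuses (`false`) are openers, pluses (`true`) are closers;
each plus is matched with the most recent unmatched minus, i.e. each minus with the first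
subsequent unmatched plus.  Returns the list of matched pairs (p,q) of 1-based positions
and the list of unmatched minus positions. -/
def matchAux : List Bool → ℕ → List ℕ → List (ℕ × ℕ) × List ℕ
  | [], _, stack => ([], stack)
  | b :: rest, pos, stack =>
    if b then
      match stack with
      | [] => matchAux rest (pos + 1) []
      | p :: stack' =>
        let res := matchAux rest (pos + 1) stack'
        ((p, pos) :: res.1, res.2)
    else matchAux rest (pos + 1) (pos :: stack)

/-- d(ε) = #{(p,q) : p < q, ε_p = −, ε_q = +}. -/
def dstat {n : ℕ} (ε : Fin n → Bool) : ℕ :=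
  (Finset.univ.filter fun pq : Fin n × Fin n =>
    pq.1 < pq.2 ∧ ε pq.1 = false ∧ ε pq.2 = true).card

/-- The polynomial Q_ε. -/
def Qpoly (n : ℕ) (ε : Fin n → Bool) : MvPolynomial (Fin n) F :=
  MvPolynomial.C (v⁻¹ ^ dstat ε) *
    ((matchAux (List.ofFn ε) 1 []).1.map fun pq =>
        xv n pq.1 - MvPolynomial.C (v ^ (pq.2 + 1 - pq.1)) * xv n pq.2).prod *
    ((matchAux (List.ofFn ε) 1 []).2.map fun p => xv n p).prod

/-- The operator T_m on M′ (the parabolic module induced from T_j ↦ v). -/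
def Thk' (n k : ℕ) (m : ℕ) : M n k →ₗ[F] M n k :=
  (Pi.basisFun F (Stt n k)).constr ℕ fun ε =>
    if h : 1 ≤ m ∧ m < n then
      let a := ε.1 ⟨m - 1, by omega⟩
      let b := ε.1 ⟨m, h.2⟩
      if a = true ∧ b = false then bv (actS (sperm n m) ε)
      else if a = b then v • bv ε
      else bv (actS (sperm n m) ε) + (v - v⁻¹) • bv ε
    else 0

/-- The map Φ : M′ → ℚ(v)[x_1,…,x_n], ε ↦ v^{−d(ε)} ∏_{t : ε_t = −} x_t. -/
def Phi (n k : ℕ) : M n k →ₗ[F] MvPolynomial (Fin n) F :=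
  (Pi.basisFun F (Stt n k)).constr ℕ fun ε =>
    MvPolynomial.C (v⁻¹ ^ dstat ε.1) *
      ∏ t ∈ Finset.univ.filter (fun t => ε.1 t = false), MvPolynomial.X t

/-- The space P(k,n): polynomials homogeneous of total degree n−k, of degree ≤ 1 in each
variable. -/
def Pspace (n k : ℕ) : Set (MvPolynomial (Fin n) F) :=
  {f | f.IsHomogeneous (n - k) ∧ ∀ t : Fin n, f.degreeOf t ≤ 1}

/-!
Write `ε = l₁ (+ -) l₂` and `s_m ε = l₁ (- +) l₂`. In the parenthesis matching, the minus `p`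
closed by the plus at `m` (if any) and the plus `q` closing the minus at `m + 1` (if any) are
traded for the pairs `(m, m + 1)` and `(p, q)`, and nothing else changes. Hence
`Q_ε = G (P - c x_m) (x_{m+1} - d Q)` and `Q_{s_m ε} = v⁻¹ G (x_m - v² x_{m+1}) (P - cd Q)` with
`G, P, Q` free of `x_m, x_{m+1}`, and a one-line computation gives `∇_m Q_ε = Q_{s_m ε}`.
Starting from `Q_𝟏 = x_{k+1} ⋯ x_n`, this yields the formula along every word each of whose
letters turns a `+-` into `-+`.

A letter raises `d` by at most one, and by one exactly when it turns a `+-` into `-+`. The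
canonical word of `w_λ` does so at every step (row after row it moves a plus of `𝟏` to the
right), so `d(w_λ·𝟏) = |λ| ≥ ℓ(w_λ)`. A reduced word of `w_λ` has length `ℓ(w_λ)` and leads from
`d(𝟏) = 0` to `d(w_λ·𝟏)`, so it too must raise `d` at every step.
-/

section Polynomials

variable {n m : ℕ}

lemma v_ne_zero : v ≠ 0 := RatFunc.X_ne_zero

lemma v_pow_sub {a b : ℕ} (h : a ≤ b) : v ^ (b - a) = v⁻¹ ^ a * v ^ b := by
  rw [pow_sub₀ v v_ne_zero h, inv_pow, mul_comm]

lemma xv_of_le {p : ℕ} (h : 1 ≤ p ∧ p ≤ n) : xv n p = MvPolynomial.X ⟨p - 1, by omega⟩ :=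
  dif_pos h

def varAlg (n : ℕ) (K : Set ℕ) : Subalgebra F (MvPolynomial (Fin n) F) :=
  Algebra.adjoin F (xv n '' K)

lemma varAlg_mono {K K' : Set ℕ} (h : K ⊆ K') : varAlg n K ≤ varAlg n K' :=
  Algebra.adjoin_mono (Set.image_mono h)

lemma xv_mem_varAlg {K : Set ℕ} {p : ℕ} (hp : p ∈ K) : xv n p ∈ varAlg n K :=
  Algebra.subset_adjoin ⟨p, hp, rfl⟩

lemma C_mem_varAlg (K : Set ℕ) (c : F) : MvPolynomial.C c ∈ varAlg n K :=
  Subalgebra.algebraMap_mem _ c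

lemma prod_xv_mem_varAlg {K : Set ℕ} {s : List ℕ} (hs : ∀ x ∈ s, x ∈ K) :
    (s.map (xv n)).prod ∈ varAlg n K :=
  Subalgebra.list_prod_mem _ (List.forall_mem_map.2 fun _ hx => xv_mem_varAlg (hs _ hx))

lemma swapf_eq_rename (h : 1 ≤ m ∧ m < n) (f : MvPolynomial (Fin n) F) :
    swapf n m f = MvPolynomial.rename (Equiv.swap ⟨m - 1, by omega⟩ ⟨m, h.2⟩) f :=
  dif_pos h

lemma swapf_mul (h : 1 ≤ m ∧ m < n) (f g : MvPolynomial (Fin n) F) :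
    swapf n m (f * g) = swapf n m f * swapf n m g := by
  simp only [swapf_eq_rename h, map_mul]

lemma swapf_sub (h : 1 ≤ m ∧ m < n) (f g : MvPolynomial (Fin n) F) :
    swapf n m (f - g) = swapf n m f - swapf n m g := by
  simp only [swapf_eq_rename h, map_sub]

lemma swapf_C (h : 1 ≤ m ∧ m < n) (c : F) :
    swapf n m (MvPolynomial.C c) = MvPolynomial.C c := by
  rw [swapf_eq_rename h, MvPolynomial.rename_C]

lemma swapf_xv_of_ne (h : 1 ≤ m ∧ m < n) {t : ℕ} (ht : t ≠ m ∧ t ≠ m + 1) :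
    swapf n m (xv n t) = xv n t := by
  rw [swapf_eq_rename h, xv]
  split_ifs
  · rw [MvPolynomial.rename_X, Equiv.swap_apply_of_ne_of_ne] <;> simp [Fin.ext_iff] <;> omega
  · rw [map_zero]

lemma swapf_xv_self (h : 1 ≤ m ∧ m < n) : swapf n m (xv n m) = xv n (m + 1) := by
  rw [swapf_eq_rename h, xv_of_le ⟨h.1, by omega⟩, MvPolynomial.rename_X, Equiv.swap_apply_left,
    xv_of_le ⟨by omega, by omega⟩]
  rfl

lemma swapf_xv_succ (h : 1 ≤ m ∧ m < n) : swapf n m (xv n (m + 1)) = xv n m := by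
  rw [swapf_eq_rename h, xv_of_le ⟨by omega, by omega⟩, xv_of_le ⟨h.1, by omega⟩]
  simp only [Nat.add_sub_cancel, MvPolynomial.rename_X, Equiv.swap_apply_right]

lemma swapf_eq_self_of_mem (h : 1 ≤ m ∧ m < n) {f : MvPolynomial (Fin n) F}
    (hf : f ∈ varAlg n {x | x ≠ m ∧ x ≠ m + 1}) : swapf n m f = f := by
  rw [swapf_eq_rename h]
  refine (AlgHom.eqOn_adjoin_iff (ψ := AlgHom.id F _)).2 ?_ hf
  rintro _ ⟨t, ht, rfl⟩
  rw [← swapf_eq_rename h]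
  exact swapf_xv_of_ne h ht

lemma ddiff_eq_of_sub_swapf (h : 1 ≤ m ∧ m < n) {f g : MvPolynomial (Fin n) F}
    (hfg : f - swapf n m f = (xv n m - xv n (m + 1)) * g) : ddiff n m f = g := by
  have hex : ∃ g', f - swapf n m f = (xv n m - xv n (m + 1)) * g' := ⟨g, hfg⟩
  have hne : xv n m - xv n (m + 1) ≠ 0 := by
    rw [xv_of_le ⟨h.1, by omega⟩, xv_of_le ⟨by omega, by omega⟩, sub_ne_zero,
      Ne, MvPolynomial.X_inj, Fin.ext_iff]
    simp only
    omega
  rw [ddiff, dif_pos hex]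
  exact mul_left_cancel₀ hne (hex.choose_spec.symm.trans hfg)

def pairFactor (n : ℕ) (pq : ℕ × ℕ) : MvPolynomial (Fin n) F :=
  xv n pq.1 - MvPolynomial.C (v ^ (pq.2 + 1 - pq.1)) * xv n pq.2

lemma pairFactor_mem_varAlg {K : Set ℕ} {p q : ℕ} (hp : p ∈ K) (hq : q ∈ K) :
    pairFactor n (p, q) ∈ varAlg n K :=
  Subalgebra.sub_mem _ (xv_mem_varAlg hp)
    (Subalgebra.mul_mem _ (C_mem_varAlg K _) (xv_mem_varAlg hq))

/-- With `A = x_m`, `B = x_{m+1}` and `G, P, Q` symmetric in them, `(P - cA)(B - dQ)` has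
divided difference `cdQ - P`, and `(vB - v⁻¹A)(cdQ - P) = v⁻¹ (A - v²B)(P - cdQ)`. -/
lemma nabla_mul_plus_minus (h : 1 ≤ m ∧ m < n) {G P Q : MvPolynomial (Fin n) F}
    (hG : G ∈ varAlg n {x | x ≠ m ∧ x ≠ m + 1}) (hP : P ∈ varAlg n {x | x ≠ m ∧ x ≠ m + 1})
    (hQ : Q ∈ varAlg n {x | x ≠ m ∧ x ≠ m + 1}) (c d : F) :
    nabla n m (G * ((P - MvPolynomial.C c * xv n m) * (xv n (m + 1) - MvPolynomial.C d * Q))) =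
      MvPolynomial.C v⁻¹ *
        (G * (pairFactor n (m, m + 1) * (P - MvPolynomial.C (c * d) * Q))) := by
  have hdd : ddiff n m (G * ((P - MvPolynomial.C c * xv n m) *
      (xv n (m + 1) - MvPolynomial.C d * Q))) = G * (MvPolynomial.C (c * d) * Q - P) := by
    apply ddiff_eq_of_sub_swapf h
    simp only [swapf_mul h, swapf_sub h, swapf_C h, swapf_xv_self h, swapf_xv_succ h,
      swapf_eq_self_of_mem h hG, swapf_eq_self_of_mem h hP, swapf_eq_self_of_mem h hQ, map_mul]
    ring
  have hv : (MvPolynomial.C v⁻¹ * MvPolynomial.C (v ^ 2) : MvPolynomial (Fin n) F) =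
      MvPolynomial.C v := by
    rw [← map_mul, sq, ← mul_assoc, inv_mul_cancel₀ v_ne_zero, one_mul]
  rw [nabla, hdd, pairFactor, show m + 1 + 1 - m = 2 by omega, ← hv]
  ring

end Polynomials

section Matching

variable {n : ℕ}

def matchPoly (n : ℕ) (l : List Bool) (pos : ℕ) (st : List ℕ) : MvPolynomial (Fin n) F :=
  ((matchAux l pos st).1.map (pairFactor n)).prod * ((matchAux l pos st).2.map (xv n)).prod

lemma Qpoly_eq_matchPoly (ε : Fin n → Bool) :
    Qpoly n ε = MvPolynomial.C (v⁻¹ ^ dstat ε) * matchPoly n (List.ofFn ε) 1 [] :=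
  mul_assoc _ _ _

@[simp]
lemma matchPoly_nil (pos : ℕ) (st : List ℕ) : matchPoly n [] pos st = (st.map (xv n)).prod := by
  simp [matchPoly, matchAux]

@[simp]
lemma matchPoly_false_cons (l : List Bool) (pos : ℕ) (st : List ℕ) :
    matchPoly n (false :: l) pos st = matchPoly n l (pos + 1) (pos :: st) := rfl

@[simp]
lemma matchPoly_true_cons_nil (l : List Bool) (pos : ℕ) :
    matchPoly n (true :: l) pos [] = matchPoly n l (pos + 1) [] := rfl

@[simp]
lemma matchPoly_true_cons_cons (l : List Bool) (pos p : ℕ) (st : List ℕ) :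
    matchPoly n (true :: l) pos (p :: st) = pairFactor n (p, pos) * matchPoly n l (pos + 1) st := by
  simp [matchPoly, matchAux, mul_assoc]

lemma matchPoly_append (l₁ l₂ : List Bool) (pos : ℕ) (st : List ℕ) :
    matchPoly n (l₁ ++ l₂) pos st = ((matchAux l₁ pos st).1.map (pairFactor n)).prod *
      matchPoly n l₂ (pos + l₁.length) (matchAux l₁ pos st).2 := by
  induction l₁ generalizing pos st with
  | nil => simp [matchAux, matchPoly]
  | cons b l₁ ih =>
    rcases b with _ | _ <;> [skip; rcases st with _ | ⟨p, st⟩] <;>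
      simp [matchAux, ih, mul_assoc, Nat.add_right_comm _ 1, Nat.add_assoc]

lemma matchAux_lt (l : List Bool) (pos : ℕ) (st : List ℕ) (hst : ∀ x ∈ st, x < pos + l.length) :
    (∀ pq ∈ (matchAux l pos st).1, pq.1 < pos + l.length ∧ pq.2 < pos + l.length) ∧
      ∀ x ∈ (matchAux l pos st).2, x < pos + l.length := by
  induction l generalizing pos st with
  | nil => simpa [matchAux] using hst
  | cons b l ih =>
    rw [List.length_cons, ← Nat.add_assoc, Nat.add_right_comm] at hst ⊢
    rcases b with _ | _
    · refine ih (pos + 1) (pos :: st) fun x hx => ?_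
      rcases List.mem_cons.1 hx with rfl | hx
      exacts [by omega, hst x hx]
    · rcases st with _ | ⟨p, st⟩
      · exact ih (pos + 1) [] (by simp)
      · obtain ⟨ih₁, ih₂⟩ := ih (pos + 1) st fun x hx => hst x (List.mem_cons_of_mem _ hx)
        refine ⟨?_, ih₂⟩
        rintro pq (_ | ⟨_, hpq⟩)
        exacts [⟨hst p List.mem_cons_self, by omega⟩, ih₁ pq hpq]

lemma matchPoly_mem_varAlg (l : List Bool) (pos : ℕ) (st : List ℕ) :
    matchPoly n l pos st ∈ varAlg n {x | x ∈ st ∨ pos ≤ x} := by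
  induction l generalizing pos st with
  | nil =>
    rw [matchPoly_nil]
    exact prod_xv_mem_varAlg (K := {x | x ∈ st ∨ pos ≤ x}) fun x hx => Or.inl hx
  | cons b l ih =>
    rcases b with _ | _
    · refine varAlg_mono ?_ (ih (pos + 1) (pos :: st))
      rintro x (hx | hx)
      · rcases List.mem_cons.1 hx with rfl | hx
        exacts [Or.inr le_rfl, Or.inl hx]
      · exact Or.inr (by omega)
    · rcases st with _ | ⟨p, st⟩
      · exact varAlg_mono (fun x hx => by simp at hx ⊢; omega) (ih (pos + 1) [])
      · rw [matchPoly_true_cons_cons]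
        refine Subalgebra.mul_mem _ (pairFactor_mem_varAlg (by simp) (by simp)) ?_
        refine varAlg_mono ?_ (ih (pos + 1) st)
        rintro x (hx | hx)
        exacts [Or.inl (List.mem_cons_of_mem _ hx), Or.inr (by omega)]

lemma pairFactor_eq {a q : ℕ} (h : a ≤ q + 1) :
    pairFactor n (a, q) =
      xv n a - MvPolynomial.C (v⁻¹ ^ a) * (MvPolynomial.C (v ^ (q + 1)) * xv n q) := by
  rw [pairFactor, v_pow_sub h, map_mul, mul_assoc]

/-- Replacing an entry `a` of the stack by `b` only changes the factor in which it ends up: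
`x_a` if it stays unmatched (`Q = 0`), the pair factor of `(a, q)` if a later plus `q` closes
it (`Q = v^(q+1) x_q`). -/
lemma matchPoly_subst (l : List Bool) (pos : ℕ) (s₁ s₂ : List ℕ) {a b : ℕ} (ha : a < pos)
    (hb : b < pos) :
    ∃ G Q, G ∈ varAlg n {x | x ∈ s₁ ∨ x ∈ s₂ ∨ pos ≤ x} ∧ Q ∈ varAlg n {x | pos ≤ x} ∧
      matchPoly n l pos (s₁ ++ a :: s₂) = G * (xv n a - MvPolynomial.C (v⁻¹ ^ a) * Q) ∧
      matchPoly n l pos (s₁ ++ b :: s₂) = G * (xv n b - MvPolynomial.C (v⁻¹ ^ b) * Q) := by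
  induction l generalizing pos s₁ with
  | nil =>
    refine ⟨(s₁.map (xv n)).prod * (s₂.map (xv n)).prod, 0,
      Subalgebra.mul_mem _ (prod_xv_mem_varAlg fun x hx => Or.inl hx)
        (prod_xv_mem_varAlg fun x hx => Or.inr (Or.inl hx)), Subalgebra.zero_mem _, ?_, ?_⟩ <;>
    simp only [matchPoly_nil, List.map_append, List.map_cons, List.prod_append, List.prod_cons] <;>
    ring
  | cons c l ih =>
    rcases c with _ | _
    · obtain ⟨G, Q, hG, hQ, h₁, h₂⟩ := ih (pos + 1) (pos :: s₁) (by omega) (by omega)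
      refine ⟨G, Q, varAlg_mono ?_ hG,
        varAlg_mono (fun x (hx : pos + 1 ≤ x) => show pos ≤ x by omega) hQ, h₁, h₂⟩
      · rintro x (hx | hx | hx)
        · rcases List.mem_cons.1 hx with rfl | hx
          exacts [Or.inr (Or.inr le_rfl), Or.inl hx]
        exacts [Or.inr (Or.inl hx), Or.inr (Or.inr (by omega))]
    · rcases s₁ with _ | ⟨p, s₁⟩
      · refine ⟨matchPoly n l (pos + 1) s₂, MvPolynomial.C (v ^ (pos + 1)) * xv n pos,
          varAlg_mono ?_ (matchPoly_mem_varAlg l (pos + 1) s₂),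
          Subalgebra.mul_mem _ (C_mem_varAlg _ _) 
            (xv_mem_varAlg (K := {x | pos ≤ x}) (le_refl pos)), ?_, ?_⟩
        · rintro x (hx | hx)
          exacts [Or.inr (Or.inl hx), Or.inr (Or.inr (by omega))]
        all_goals
          rw [List.nil_append, matchPoly_true_cons_cons, pairFactor_eq (by omega), mul_comm]
      · obtain ⟨G, Q, hG, hQ, h₁, h₂⟩ := ih (pos + 1) s₁ (by omega) (by omega)
        refine ⟨pairFactor n (p, pos) * G, Q, Subalgebra.mul_mem _
          (pairFactor_mem_varAlg (Or.inl List.mem_cons_self) (Or.inr (Or.inr le_rfl)))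
          (varAlg_mono ?_ hG),
          varAlg_mono (fun x (hx : pos + 1 ≤ x) => show pos ≤ x by omega) hQ, ?_, ?_⟩
        · rintro x (hx | hx | hx)
          exacts [Or.inl (List.mem_cons_of_mem _ hx), Or.inr (Or.inl hx),
            Or.inr (Or.inr (by omega))]
        all_goals simp only [List.cons_append, matchPoly_true_cons_cons, h₁, h₂, mul_assoc]

/-- Adding `a` at the bottom of the stack multiplies by `x_a` if `a` stays unmatched (`Q = 0`),
and otherwise by the pair factor of `(a, q)` (`Q = v^(q+1) x_q`). -/
lemma matchPoly_append_singleton (l : List Bool) (pos : ℕ) (st : List ℕ) {a : ℕ} (ha : a < pos) :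
    ∃ G Q, G ∈ varAlg n {x | x ∈ st ∨ pos ≤ x} ∧ Q ∈ varAlg n {x | pos ≤ x} ∧
      matchPoly n l pos (st ++ [a]) = G * (xv n a - MvPolynomial.C (v⁻¹ ^ a) * Q) ∧
      matchPoly n l pos st = G := by
  induction l generalizing pos st with
  | nil =>
    refine ⟨(st.map (xv n)).prod, 0, prod_xv_mem_varAlg fun x hx => Or.inl hx,
      Subalgebra.zero_mem _, ?_, by simp⟩
    simp
  | cons c l ih =>
    rcases c with _ | _
    · obtain ⟨G, Q, hG, hQ, h₁, h₂⟩ := ih (pos + 1) (pos :: st) (by omega)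
      refine ⟨G, Q, varAlg_mono ?_ hG,
        varAlg_mono (fun x (hx : pos + 1 ≤ x) => show pos ≤ x by omega) hQ, h₁, h₂⟩
      · rintro x (hx | hx)
        · rcases List.mem_cons.1 hx with rfl | hx
          exacts [Or.inr le_rfl, Or.inl hx]
        exact Or.inr (by omega)
    · rcases st with _ | ⟨p, st⟩
      · refine ⟨matchPoly n l (pos + 1) [], MvPolynomial.C (v ^ (pos + 1)) * xv n pos,
          varAlg_mono ?_ (matchPoly_mem_varAlg l (pos + 1) []),
          Subalgebra.mul_mem _ (C_mem_varAlg _ _) 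
            (xv_mem_varAlg (K := {x | pos ≤ x}) (le_refl pos)), ?_, rfl⟩
        · rintro x (hx | hx)
          exacts [absurd hx List.not_mem_nil, Or.inr (by omega)]
        rw [List.nil_append, matchPoly_true_cons_cons, pairFactor_eq (by omega), mul_comm]
      · obtain ⟨G, Q, hG, hQ, h₁, h₂⟩ := ih (pos + 1) st (by omega)
        refine ⟨pairFactor n (p, pos) * G, Q, Subalgebra.mul_mem _
          (pairFactor_mem_varAlg (Or.inl List.mem_cons_self) (Or.inr le_rfl))
          (varAlg_mono ?_ hG),
          varAlg_mono (fun x (hx : pos + 1 ≤ x) => show pos ≤ x by omega) hQ, ?_, ?_⟩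
        · rintro x (hx | hx)
          exacts [Or.inl (List.mem_cons_of_mem _ hx), Or.inr (by omega)]
        all_goals simp only [List.cons_append, matchPoly_true_cons_cons, h₁, h₂, mul_assoc]

/-- The local picture behind `∇_m Q_ε = Q_{s_m ε}`: `p` is the minus that the plus at `m`
closes in `+-` (absent if the stack `S` is empty, then `P = 1`, `c = 0`), and `q` the plus
closing the minus at `m + 1` (absent if `Q = 0`); in `-+` they close `(m, m + 1)` and `p`
is closed by `q`. -/
lemma matchPoly_plus_minus (l : List Bool) (m : ℕ) (S : List ℕ) (hS : ∀ x ∈ S, x < m) :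
    ∃ G P Q c, G ∈ varAlg n {x | x ≠ m ∧ x ≠ m + 1} ∧ P ∈ varAlg n {x | x ≠ m ∧ x ≠ m + 1} ∧
      Q ∈ varAlg n {x | x ≠ m ∧ x ≠ m + 1} ∧
      matchPoly n (true :: false :: l) m S = G * ((P - MvPolynomial.C c * xv n m) *
        (xv n (m + 1) - MvPolynomial.C (v⁻¹ ^ (m + 1)) * Q)) ∧
      matchPoly n (false :: true :: l) m S =
        G * (pairFactor n (m, m + 1) * (P - MvPolynomial.C (c * v⁻¹ ^ (m + 1)) * Q)) := by
  have hK {K : Set ℕ} (hK : ∀ x ∈ K, x < m ∨ m + 2 ≤ x) :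
      varAlg n K ≤ varAlg n {x | x ≠ m ∧ x ≠ m + 1} :=
    varAlg_mono fun x hx => show x ≠ m ∧ x ≠ m + 1 by rcases hK x hx with h | h <;> omega
  rcases S with _ | ⟨p, S⟩
  · obtain ⟨G, Q, hG, hQ, h₁, h₂⟩ := matchPoly_append_singleton (n := n) l (m + 2) [] (a := m + 1)
      (by omega)
    refine ⟨G, 1, Q, 0, hK (fun x (hx : x ∈ [] ∨ m + 2 ≤ x) => Or.inr (hx.resolve_left List.not_mem_nil)) hG, Subalgebra.one_mem _,
      hK (fun x hx => Or.inr hx) hQ, ?_, ?_⟩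
    · simp only [matchPoly_true_cons_nil, matchPoly_false_cons, List.nil_append] at h₁ ⊢
      rw [h₁]
      simp
    · simp only [matchPoly_false_cons, matchPoly_true_cons_cons, h₂]
      simp [mul_comm]
  · have hp : p < m := hS p List.mem_cons_self
    obtain ⟨G, Q, hG, hQ, h₁, h₂⟩ := matchPoly_subst (n := n) l (m + 2) [] S (a := m + 1) (b := p)
      (by omega) (by omega)
    refine ⟨G, xv n p, Q, v ^ (m + 1 - p), hK ?_ hG, xv_mem_varAlg (show p ≠ m ∧ p ≠ m + 1 by omega),
      hK (fun x hx => Or.inr hx) hQ, ?_, ?_⟩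
    · rintro x (hx | hx | hx)
      exacts [absurd hx List.not_mem_nil, Or.inl (hS x (List.mem_cons_of_mem _ hx)), Or.inr hx]
    · simp only [matchPoly_true_cons_cons, matchPoly_false_cons, List.nil_append] at h₁ ⊢
      rw [h₁, pairFactor]
      ring
    · simp only [matchPoly_false_cons, matchPoly_true_cons_cons, List.nil_append] at h₂ ⊢
      rw [h₂, v_pow_sub (by omega : p ≤ m + 1), mul_assoc, ← mul_pow, mul_inv_cancel₀ v_ne_zero,
        one_pow, mul_one]
      ring

end Matching

section Inversions

variable {n m : ℕ}

lemma actE_sperm (h : 1 ≤ m ∧ m < n) (ε : Fin n → Bool) :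
    actE (sperm n m) ε = ε ∘ Equiv.swap ⟨m - 1, by omega⟩ ⟨m, h.2⟩ := by
  funext u
  simp [actE, sperm, dif_pos h, Equiv.swap_inv]

lemma actE_one (ε : Fin n → Bool) : actE 1 ε = ε := rfl

lemma swap_lt_swap_iff {a b x y : Fin n} (hab : (a : ℕ) + 1 = b) (h : ¬(x = a ∧ y = b))
    (h' : ¬(x = b ∧ y = a)) : Equiv.swap a b x < Equiv.swap a b y ↔ x < y := by
  simp only [Fin.ext_iff, not_and] at h h'
  rw [Equiv.swap_apply_def, Equiv.swap_apply_def]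
  split_ifs <;> simp only [Fin.lt_def, Fin.ext_iff] at * <;> omega

lemma dstat_eq_sum (δ : Fin n → Bool) :
    dstat δ = ∑ pq : Fin n × Fin n,
      if pq.1 < pq.2 ∧ δ pq.1 = false ∧ δ pq.2 = true then 1 else 0 :=
  Finset.card_filter _ _

/-- Swapping the adjacent positions `m, m + 1` changes `d` only through the pair they form. -/
lemma dstat_actE_sperm_add (h : 1 ≤ m ∧ m < n) (ε : Fin n → Bool) :
    dstat (actE (sperm n m) ε) +
        (if ε ⟨m - 1, by omega⟩ = false ∧ ε ⟨m, h.2⟩ = true then 1 else 0) =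
      dstat ε + (if ε ⟨m - 1, by omega⟩ = true ∧ ε ⟨m, h.2⟩ = false then 1 else 0) := by
  set a : Fin n := ⟨m - 1, by omega⟩
  set b : Fin n := ⟨m, h.2⟩
  set s := Equiv.swap a b
  have hab : (a : ℕ) + 1 = b := by simp only [a, b]; omega
  have hba : ¬b < a := by simp only [Fin.lt_def, a, b]; omega
  have hreindex : dstat (actE (sperm n m) ε) = ∑ pq : Fin n × Fin n,
      if s pq.1 < s pq.2 ∧ ε pq.1 = false ∧ ε pq.2 = true then 1 else 0 := by
    rw [actE_sperm h]
    change dstat (ε ∘ s) = _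
    rw [dstat_eq_sum, ← Equiv.sum_comp (s.prodCongr s)]
    simp [s, Equiv.swap_apply_self]
  have hdiff : ∑ pq : Fin n × Fin n,
      ((if s pq.1 < s pq.2 ∧ ε pq.1 = false ∧ ε pq.2 = true then 1 else 0 : ℤ) -
        if pq.1 < pq.2 ∧ ε pq.1 = false ∧ ε pq.2 = true then 1 else 0) =
      (if ε a = true ∧ ε b = false then 1 else 0) - if ε a = false ∧ ε b = true then 1 else 0 := by
    rw [Fintype.sum_eq_add (a, b) (b, a) (by simp [Prod.ext_iff, Fin.ext_iff]; omega)]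
    · simp only [s, Equiv.swap_apply_left, Equiv.swap_apply_right, hba,
        Fin.lt_def.2 (by omega : (a : ℕ) < b)]
      split_ifs <;> simp_all
    · rintro ⟨x, y⟩ ⟨hxy, hyx⟩
      simp only [s, swap_lt_swap_iff hab (fun h => hxy (Prod.ext h.1 h.2))
        (fun h => hyx (Prod.ext h.1 h.2)), sub_self]
  rw [hreindex, dstat_eq_sum]
  zify
  rw [Finset.sum_sub_distrib] at hdiff
  linarith

/-- `ε` reads `+-` at the 1-based positions `m, m + 1`. -/
def PlusMinusAt (ε : Fin n → Bool) (m : ℕ) : Prop :=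
  ∃ h : 1 ≤ m ∧ m < n, ε ⟨m - 1, by omega⟩ = true ∧ ε ⟨m, h.2⟩ = false

lemma dstat_actE_sperm_of_plusMinusAt {ε : Fin n → Bool} (hε : PlusMinusAt ε m) :
    dstat (actE (sperm n m) ε) = dstat ε + 1 := by
  obtain ⟨h, h₁, h₂⟩ := hε
  simpa [h₁, h₂] using dstat_actE_sperm_add h ε

lemma dstat_actE_sperm_le_of_not_plusMinusAt {ε : Fin n → Bool} (hε : ¬PlusMinusAt ε m) :
    dstat (actE (sperm n m) ε) ≤ dstat ε := by
  by_cases h : 1 ≤ m ∧ m < n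
  · have := dstat_actE_sperm_add h ε
    rw [if_neg fun hc => hε ⟨h, hc⟩] at this
    omega
  · rw [show sperm n m = 1 from dif_neg h, actE_one]

lemma len_one : len (1 : Equiv.Perm (Fin n)) = 0 :=
  Finset.card_eq_zero.2 (Finset.filter_eq_empty_iff.2 fun _ _ h => lt_asymm h.1 h.2)

lemma len_sperm_mul_le (m : ℕ) (w : Equiv.Perm (Fin n)) :
    len (sperm n m * w) ≤ len w + 1 := by
  by_cases h : 1 ≤ m ∧ m < n
  · set a : Fin n := ⟨m - 1, by omega⟩
    set b : Fin n := ⟨m, h.2⟩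
    have hab : (a : ℕ) + 1 = b := by simp only [a, b]; omega
    calc len (sperm n m * w)
        ≤ (insert (w⁻¹ a, w⁻¹ b) (Finset.univ.filter fun pq : Fin n × Fin n =>
            pq.1 < pq.2 ∧ w pq.2 < w pq.1)).card := by
          refine Finset.card_le_card fun pq hpq => ?_
          simp only [Finset.mem_filter, Finset.mem_univ, true_and, sperm, dif_pos h,
            Equiv.Perm.mul_apply] at hpq
          simp only [Finset.mem_insert, Finset.mem_filter, Finset.mem_univ, true_and,
            Prod.ext_iff, Equiv.Perm.eq_inv_iff_eq]
          by_cases hc : w pq.1 = a ∧ w pq.2 = b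
          · exact Or.inl ⟨hc.1, hc.2⟩
          · refine Or.inr ⟨hpq.1, ?_⟩
            by_contra! hle
            have hlt : w pq.1 < w pq.2 := lt_of_le_of_ne hle fun he => hpq.1.ne (w.injective he)
            have hba : ¬(w pq.1 = b ∧ w pq.2 = a) := fun h' => by
              rw [h'.1, h'.2, Fin.lt_def] at hlt
              omega
            exact hpq.2.not_gt ((swap_lt_swap_iff hab hc hba).2 hlt)
      _ ≤ len w + 1 := Finset.card_insert_le _ _
  · simp [sperm, h]

lemma len_prod_le (l : List ℕ) : len ((l.map (sperm n)).prod) ≤ l.length := by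
  induction l with
  | nil => simp [len_one]
  | cons m l ih =>
    rw [List.map_cons, List.prod_cons, List.length_cons]
    exact (len_sperm_mul_le m _).trans (by omega)

end Inversions

section Words

variable {n : ℕ}

/-- `actWord n [i_ℓ, …, i_1] ε = s_{i_ℓ} ⋯ s_{i_1} · ε`. -/
def actWord (n : ℕ) (l : List ℕ) (ε : Fin n → Bool) : Fin n → Bool :=
  l.foldr (fun m e => actE (sperm n m) e) ε

lemma actWord_append (l₁ l₂ : List ℕ) (ε : Fin n → Bool) :
    actWord n (l₁ ++ l₂) ε = actWord n l₁ (actWord n l₂ ε) :=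
  List.foldr_append

lemma actWord_eq_actE_prod (l : List ℕ) (ε : Fin n → Bool) :
    actWord n l ε = actE (l.map (sperm n)).prod ε := by
  induction l with
  | nil => rfl
  | cons m l ih =>
    rw [actWord, List.foldr_cons, ← actWord, ih, List.map_cons, List.prod_cons]
    rfl

def IsRaising (n : ℕ) : List ℕ → (Fin n → Bool) → Prop
  | [], _ => True
  | m :: l, ε => IsRaising n l ε ∧ PlusMinusAt (actWord n l ε) m

lemma isRaising_append (l₁ l₂ : List ℕ) (ε : Fin n → Bool) :
    IsRaising n (l₁ ++ l₂) ε ↔ IsRaising n l₁ (actWord n l₂ ε) ∧ IsRaising n l₂ ε := by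
  induction l₁ with
  | nil => simp [IsRaising]
  | cons m l₁ ih =>
    simp only [List.cons_append, IsRaising, ih, actWord_append]
    tauto

lemma dstat_actWord_le (l : List ℕ) (ε : Fin n → Bool) :
    dstat (actWord n l ε) ≤ dstat ε + l.length := by
  induction l with
  | nil => rfl
  | cons m l ih =>
    change dstat (actE (sperm n m) (actWord n l ε)) ≤ _
    by_cases hm : PlusMinusAt (actWord n l ε) m
    · rw [dstat_actE_sperm_of_plusMinusAt hm, List.length_cons]
      omega
    · have := dstat_actE_sperm_le_of_not_plusMinusAt hm
      simp only [List.length_cons]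
      omega

lemma isRaising_iff_dstat (l : List ℕ) (ε : Fin n → Bool) :
    IsRaising n l ε ↔ dstat (actWord n l ε) = dstat ε + l.length := by
  induction l with
  | nil => simp [IsRaising, actWord]
  | cons m l ih =>
    change _ ↔ dstat (actE (sperm n m) (actWord n l ε)) = _
    have hle := dstat_actWord_le l ε
    by_cases hm : PlusMinusAt (actWord n l ε) m
    · rw [IsRaising, dstat_actE_sperm_of_plusMinusAt hm, ih, List.length_cons]
      simp only [hm, and_true]
      omega
    · have := dstat_actE_sperm_le_of_not_plusMinusAt hm
      simp only [IsRaising, hm, and_false, false_iff, List.length_cons]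
      omega

end Words

section CanonicalWord

variable {n k : ℕ} {lam : ℕ → ℕ}

lemma IsYoung.antitone (hY : IsYoung n k lam) {s i : ℕ} (hs : 1 ≤ s) (hsi : s ≤ i) :
    lam i ≤ lam s :=
  Nat.le_induction le_rfl (fun i hsi ih => (hY.1 i (by omega)).trans ih) i hsi

/-- The sequence reached from `𝟏` once rows `1, …, i - 1` of `λ` and the first `c` boxes of
row `i` have acted: its pluses sit at the positions `p ≤ k - i`, at `k + 1 + c - i`, and at
`k + 1 + λ_s - s` for `s < i`. -/
def rowStage (n k : ℕ) (lam : ℕ → ℕ) (i c : ℕ) : Fin n → Bool := fun t =>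
  decide ((t : ℕ) + 1 + i ≤ k ∨ (t : ℕ) + 1 + i = k + 1 + c ∨
    ∃ s, 1 ≤ s ∧ s < i ∧ (t : ℕ) + 1 + s = k + 1 + lam s)

lemma rowStage_one_zero : rowStage n k lam 1 0 = oneSeq n k := by
  funext t
  simp only [rowStage, oneSeq, decide_eq_decide]
  constructor
  · rintro (h | h | ⟨s, h₁, h₂, _⟩) <;> omega
  · intro h
    omega

lemma rowStage_last {i : ℕ} (hi : 1 ≤ i) :
    rowStage n k lam i (lam i) = rowStage n k lam (i + 1) 0 := by
  funext t
  simp only [rowStage, decide_eq_decide]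
  constructor
  · rintro (h | h | ⟨s, h₁, h₂, h₃⟩)
    · omega
    · exact Or.inr (Or.inr ⟨i, hi, by omega, by omega⟩)
    · exact Or.inr (Or.inr ⟨s, h₁, by omega, h₃⟩)
  · rintro (h | h | ⟨s, h₁, h₂, h₃⟩)
    · omega
    · omega
    · rcases Nat.lt_or_ge s i with hs | hs
      · exact Or.inr (Or.inr ⟨s, h₁, hs, h₃⟩)
      · obtain rfl : s = i := by omega
        omega

lemma rowStage_step (hY : IsYoung n k lam) {i c : ℕ} (hi : 1 ≤ i) (hik : i ≤ k) (hc : c < lam i) :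
    PlusMinusAt (rowStage n k lam i c) (k + (c + 1) - i) ∧
      actE (sperm n (k + (c + 1) - i)) (rowStage n k lam i c) = rowStage n k lam i (c + 1) := by
  have hlam : lam i ≤ n - k := (hY.antitone le_rfl hi).trans hY.2.1
  have hmono : ∀ s, 1 ≤ s → s < i → lam i ≤ lam s := fun s hs hsi => hY.antitone hs hsi.le
  set m := k + (c + 1) - i
  have h : 1 ≤ m ∧ m < n := by omega
  have hplus : rowStage n k lam i c ⟨m - 1, by omega⟩ = true := by
    simp only [rowStage, decide_eq_true_eq]
    omega
  have hminus : ∀ c' (u : Fin n), k + 1 + c ≤ (u : ℕ) + 1 + i → (u : ℕ) + 1 + i ≤ k + 2 + c →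
      (u : ℕ) + 1 + i ≠ k + 1 + c' → rowStage n k lam i c' u = false := by
    intro c' u hu₁ hu₂ hu₃
    simp only [rowStage, decide_eq_false_iff_not]
    rintro (h' | h' | ⟨s, h₁, h₂, h₃⟩)
    · omega
    · omega
    · have := hmono s h₁ h₂
      omega
  have hminus_m : rowStage n k lam i c ⟨m, h.2⟩ = false :=
    hminus c _ (by simp; omega) (by simp; omega) (by simp; omega)
  refine ⟨⟨h, hplus, hminus_m⟩, ?_⟩
  rw [actE_sperm h]
  funext u
  simp only [Function.comp_apply, Equiv.swap_apply_def]
  split_ifs with hua hub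
  · subst hua
    rw [hminus_m, hminus (c + 1) _ (by simp; omega) (by simp; omega) (by simp; omega)]
  · subst hub
    rw [hplus]
    symm
    simp only [rowStage, decide_eq_true_eq]
    omega
  · have hua' : (u : ℕ) ≠ m - 1 := fun hc' => hua (Fin.ext hc')
    have hub' : (u : ℕ) ≠ m := fun hc' => hub (Fin.ext hc')
    simp only [rowStage, decide_eq_decide]
    constructor
    · rintro (h' | h' | h') <;> [exact Or.inl h'; omega; exact Or.inr (Or.inr h')]
    · rintro (h' | h' | h') <;> [exact Or.inl h'; omega; exact Or.inr (Or.inr h')]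

def rowWord (k i c : ℕ) : List ℕ := (List.range c).reverse.map fun j => k + (j + 1) - i

lemma actWord_rowWord (hY : IsYoung n k lam) {i : ℕ} (hi : 1 ≤ i) (hik : i ≤ k) {c : ℕ}
    (hc : c ≤ lam i) :
    actWord n (rowWord k i c) (rowStage n k lam i 0) = rowStage n k lam i c ∧
      IsRaising n (rowWord k i c) (rowStage n k lam i 0) := by
  induction c with
  | zero => exact ⟨rfl, trivial⟩
  | succ c ih =>
    obtain ⟨ih₁, ih₂⟩ := ih (by omega)
    obtain ⟨hpm, hstep⟩ := rowStage_step hY hi hik (by omega : c < lam i)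
    have hw : rowWord k i (c + 1) = (k + (c + 1) - i) :: rowWord k i c := by
      simp [rowWord, List.range_succ]
    rw [hw]
    refine ⟨?_, ih₂, ?_⟩
    · rw [← hstep, ← ih₁]
      rfl
    · rwa [ih₁]

def rowsWord (k : ℕ) (lam : ℕ → ℕ) : ℕ → List ℕ
  | 0 => []
  | i + 1 => rowWord k (i + 1) (lam (i + 1)) ++ rowsWord k lam i

lemma wword_eq_rowsWord (k : ℕ) (lam : ℕ → ℕ) : wword k lam = rowsWord k lam k := by
  suffices h : ∀ j, (((List.range j).reverse.map fun i =>
      (List.range (lam (i + 1))).reverse.map fun j => (i + 1, j + 1)).flatten).map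
        (fun b => k + b.2 - b.1) = rowsWord k lam j from h k
  intro j
  induction j with
  | zero => rfl
  | succ j ih =>
    simp only [List.range_succ, List.reverse_append, List.reverse_singleton, List.singleton_append,
      List.map_cons, List.flatten_cons, List.map_append, ih, rowsWord, rowWord, List.map_map]
    rfl

lemma actWord_rowsWord (hY : IsYoung n k lam) {i : ℕ} (hik : i ≤ k) :
    actWord n (rowsWord k lam i) (oneSeq n k) = rowStage n k lam (i + 1) 0 ∧
      IsRaising n (rowsWord k lam i) (oneSeq n k) := by
  induction i with
  | zero => exact ⟨rowStage_one_zero.symm, trivial⟩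
  | succ i ih =>
    obtain ⟨ih₁, ih₂⟩ := ih (by omega)
    obtain ⟨hrow₁, hrow₂⟩ := actWord_rowWord hY (i := i + 1) (by omega) hik le_rfl
    rw [rowsWord, actWord_append, isRaising_append, ih₁, hrow₁, rowStage_last (by omega)]
    exact ⟨rfl, hrow₂, ih₂⟩

lemma isRaising_wword (hY : IsYoung n k lam) : IsRaising n (wword k lam) (oneSeq n k) := by
  rw [wword_eq_rowsWord]
  exact (actWord_rowsWord hY le_rfl).2

end CanonicalWord

section Nabla

variable {n m : ℕ}

lemma ofFn_eq_take_append_cons (h : 1 ≤ m ∧ m < n) (δ : Fin n → Bool) :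
    List.ofFn δ = (List.ofFn δ).take (m - 1) ++
      δ ⟨m - 1, by omega⟩ :: δ ⟨m, h.2⟩ :: (List.ofFn δ).drop (m + 1) := by
  conv_lhs => rw [← List.take_append_drop (m - 1) (List.ofFn δ)]
  rw [List.drop_eq_getElem_cons (by simp; omega), List.getElem_ofFn,
    show m - 1 + 1 = m by omega, List.drop_eq_getElem_cons (by simp; omega), List.getElem_ofFn]

lemma ofFn_actE_sperm (h : 1 ≤ m ∧ m < n) (ε : Fin n → Bool) :
    ∃ l₁ l₂, l₁.length = m - 1 ∧
      List.ofFn ε = l₁ ++ ε ⟨m - 1, by omega⟩ :: ε ⟨m, h.2⟩ :: l₂ ∧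
      List.ofFn (actE (sperm n m) ε) = l₁ ++ ε ⟨m, h.2⟩ :: ε ⟨m - 1, by omega⟩ :: l₂ := by
  have hfix : ∀ u : Fin n, (u : ℕ) ≠ m - 1 → (u : ℕ) ≠ m → actE (sperm n m) ε u = ε u :=
    fun u hu hu' => by
      rw [actE_sperm h, Function.comp_apply,
        Equiv.swap_apply_of_ne_of_ne (fun he => hu (congrArg Fin.val he))
          (fun he => hu' (congrArg Fin.val he))]
  have htake : (List.ofFn (actE (sperm n m) ε)).take (m - 1) = (List.ofFn ε).take (m - 1) := by
    refine List.ext_getElem (by simp) fun i hi _ => ?_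
    simp only [List.length_take, List.length_ofFn] at hi
    simp only [List.getElem_take, List.getElem_ofFn]
    exact hfix _ (by simp; omega) (by simp; omega)
  have hdrop : (List.ofFn (actE (sperm n m) ε)).drop (m + 1) = (List.ofFn ε).drop (m + 1) := by
    refine List.ext_getElem (by simp) fun i _ _ => ?_
    simp only [List.getElem_drop, List.getElem_ofFn]
    exact hfix _ (by simp; omega) (by simp; omega)
  refine ⟨(List.ofFn ε).take (m - 1), (List.ofFn ε).drop (m + 1), by simp; omega,
    ofFn_eq_take_append_cons h ε, ?_⟩
  rw [ofFn_eq_take_append_cons h, htake, hdrop]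
  simp [actE_sperm h]

theorem nabla_Qpoly_of_plusMinusAt {ε : Fin n → Bool} (hε : PlusMinusAt ε m) :
    nabla n m (Qpoly n ε) = Qpoly n (actE (sperm n m) ε) := by
  obtain ⟨h, hplus, hminus⟩ := hε
  obtain ⟨l₁, l₂, hlen, hsplit, hsplit'⟩ := ofFn_actE_sperm h ε
  rw [hplus, hminus] at hsplit hsplit'
  have hpos : 1 + l₁.length = m := by omega
  obtain ⟨hpairs, hstack⟩ := matchAux_lt l₁ 1 [] (by simp)
  rw [hpos] at hpairs hstack
  obtain ⟨G, P, Q, c, hG, hP, hQ, h₁, h₂⟩ := matchPoly_plus_minus (n := n) l₂ m _ hstack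
  have hprefix : ((matchAux l₁ 1 []).1.map (pairFactor n)).prod ∈
      varAlg n {x | x ≠ m ∧ x ≠ m + 1} :=
    Subalgebra.list_prod_mem _ <| List.forall_mem_map.2 fun pq hpq => by
      have := hpairs pq hpq
      exact pairFactor_mem_varAlg (show pq.1 ≠ m ∧ pq.1 ≠ m + 1 by omega)
        (show pq.2 ≠ m ∧ pq.2 ≠ m + 1 by omega)
  have key := nabla_mul_plus_minus h
    (Subalgebra.mul_mem _ (Subalgebra.mul_mem _ (C_mem_varAlg _ (v⁻¹ ^ dstat ε)) hprefix) hG)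
    hP hQ c (v⁻¹ ^ (m + 1))
  rw [Qpoly_eq_matchPoly, Qpoly_eq_matchPoly, hsplit, hsplit', matchPoly_append, matchPoly_append,
    hpos, h₁, h₂, ← mul_assoc, ← mul_assoc, key, dstat_actE_sperm_of_plusMinusAt ⟨h, hplus, hminus⟩,
    pow_succ' v⁻¹ (dstat ε), map_mul MvPolynomial.C v⁻¹ (v⁻¹ ^ dstat ε)]
  ring

theorem Qpoly_actWord_of_isRaising {l : List ℕ} {ε : Fin n → Bool} (hl : IsRaising n l ε) :
    Qpoly n (actWord n l ε) = l.foldr (fun m g => nabla n m g) (Qpoly n ε) := by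
  induction l with
  | nil => rfl
  | cons m l ih =>
    rw [List.foldr_cons, ← ih hl.1, nabla_Qpoly_of_plusMinusAt hl.2]
    rfl

end Nabla

section Base

variable {n k : ℕ}

lemma ofFn_oneSeq (h : k ≤ n) :
    List.ofFn (oneSeq n k) = List.replicate k true ++ List.replicate (n - k) false := by
  refine List.ext_getElem (by simp; omega) fun i hi _ => ?_
  simp only [List.length_ofFn] at hi
  rw [List.getElem_ofFn, List.getElem_append]
  split_ifs with hik <;> simp only [List.length_replicate] at hik
  · simp [oneSeq, hik]
  · simp [oneSeq]
    omega

lemma matchPoly_replicate_true_append (j pos : ℕ) (l : List Bool) :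
    matchPoly n (List.replicate j true ++ l) pos [] = matchPoly n l (pos + j) [] := by
  induction j generalizing pos with
  | zero => rfl
  | succ j ih =>
    rw [List.replicate_succ, List.cons_append, matchPoly_true_cons_nil, ih, Nat.add_right_comm,
      Nat.add_assoc]

lemma matchPoly_replicate_false (j pos : ℕ) (st : List ℕ) :
    matchPoly n (List.replicate j false) pos st =
      (∏ i ∈ Finset.range j, xv n (pos + i)) * (st.map (xv n)).prod := by
  induction j generalizing pos st with
  | zero => simp
  | succ j ih =>
    rw [List.replicate_succ, matchPoly_false_cons, ih, Finset.prod_range_succ', List.map_cons,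
      List.prod_cons]
    simp only [Nat.add_zero, Nat.add_right_comm pos 1, ← Nat.add_assoc]
    ring

lemma dstat_oneSeq : dstat (oneSeq n k) = 0 :=
  Finset.card_eq_zero.2 <| Finset.filter_eq_empty_iff.2 fun pq _ h => by
    simp only [oneSeq, decide_eq_false_iff_not, decide_eq_true_eq] at h
    exact absurd (Fin.lt_def.1 h.1) (by omega)

lemma Qpoly_oneSeq (h : k ≤ n) : Qpoly n (oneSeq n k) = ∏ p ∈ Finset.Icc (k + 1) n, xv n p := by
  rw [Qpoly_eq_matchPoly, dstat_oneSeq, ofFn_oneSeq h, matchPoly_replicate_true_append,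
    matchPoly_replicate_false, ← Finset.Ico_add_one_right_eq_Icc, Finset.prod_Ico_eq_prod_range]
  simp [Nat.add_comm 1 k, show n + 1 - (k + 1) = n - k by omega]

end Base

theorem Qpoly_from_nabla_general (n k : ℕ) (hkn : k < n)
    (lam : ℕ → ℕ) (hY : IsYoung n k lam)
    (wrd : List ℕ)
    (hprod : (wrd.map (sperm n)).prod = wperm n k lam)
    (hred : wrd.length = len (wperm n k lam)) :
    Qpoly n (wSt n k hkn.le lam).1 =
      wrd.foldr (fun m g => nabla n m g) (∏ p ∈ Finset.Icc (k + 1) n, xv n p) := by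
  have hw : actWord n wrd (oneSeq n k) = actE (wperm n k lam) (oneSeq n k) := by
    rw [actWord_eq_actE_prod, hprod]
  have hcanonical : dstat (actE (wperm n k lam) (oneSeq n k)) = (wword k lam).length := by
    have := (isRaising_iff_dstat _ _).1 (isRaising_wword (n := n) hY)
    rw [actWord_eq_actE_prod, dstat_oneSeq, zero_add] at this
    exact this
  have hraising : IsRaising n wrd (oneSeq n k) := by
    rw [isRaising_iff_dstat, dstat_oneSeq, zero_add]
    refine le_antisymm (by simpa [dstat_oneSeq] using dstat_actWord_le wrd (oneSeq n k)) ?_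
    calc wrd.length = len (wperm n k lam) := hred
      _ ≤ (wword k lam).length := len_prod_le _
      _ = dstat (actWord n wrd (oneSeq n k)) := by rw [hw, hcanonical]
  rw [show (wSt n k hkn.le lam).1 = actWord n wrd (oneSeq n k) from hw.symm,
    Qpoly_actWord_of_isRaising hraising, Qpoly_oneSeq hkn.le]

/-- For every Young diagram λ inside the k×(n−k) rectangle and every
reduced decomposition w_λ = s_(i_ℓ)⋯s_(i_1),
Q_(w_λ·𝟏) = ∇_(i_ℓ)(⋯(∇_(i_1)(x_(k+1)⋯x_n))⋯). -/
theorem Qpoly_from_nabla (n k : ℕ) (hk : 0 < k) (hkn : k < n)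
    (lam : ℕ → ℕ) (hY : IsYoung n k lam)
    (wrd : List ℕ) (hlet : ∀ m ∈ wrd, 1 ≤ m ∧ m < n)
    (hprod : (wrd.map (sperm n)).prod = wperm n k lam)
    (hred : wrd.length = len (wperm n k lam)) :
    Qpoly n (wSt n k hkn.le lam).1 =
      wrd.foldr (fun m g => nabla n m g) (∏ p ∈ Finset.Icc (k + 1) n, xv n p) :=
  Qpoly_from_nabla_general n k hkn lam hY wrd hprod hred

end
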